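/- For every positive integer n, the ratio B_{2n}(t)/B_{2n-1}(t) is strictly increasing in t on (0, 1/2) and strictly increasing on (1/2, 1). -/

import Mathlib

open Set Real Filter

noncomputable def B (n : ℕ) (t : ℝ) : ℝ := Polynomial.aeval t (Polynomial.bernoulli n)

noncomputable def Bnum (n : ℕ) : ℝ := ((bernoulli n : ℚ) : ℝ)

/-!
The derivative of `B_{2k+2} / B_{2k+1}` is `W_k / B_{2k+1}^2`, where
`W_k = (2k+2) B_{2k+1}^2 - (2k+1) B_{2k+2} B_{2k}` is the Wronskian of `B_{2k+1}` and `B_{2k+2}`,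
so it suffices that `B_{2k+1}` does not vanish on `(0, 1/2) ∪ (1/2, 1)` and that `W_k > 0` on `[0, 1]`.

Non-vanishing follows by induction from Rolle's theorem: `B_{2k+3}` vanishes at `0` and `1/2`,
so a third zero in between would give a zero of `B_{2k+1}` in `(0, 1/2)`; symmetry handles `(1/2, 1)`.

For `k ≤ 1`, `W_k` is an explicit polynomial. For `k ≥ 2`, the Fourier expansions show that
suitably normalised multiples `S`, `C`, `C'` of `B_{2k+1}`, `B_{2k+2}`, `B_{2k}` are within
`ζ(4) - 1 < 1/8` of `sin 2πt`, `cos 2πt`, `cos 2πt`, and `W_k` is a positive multiple of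
`S^2 + C C'`, which is therefore close to `sin^2 + cos^2 = 1`.
-/

open scoped Nat

lemma B_eq_bernoulliFun (n : ℕ) : B n = bernoulliFun n := by
  funext t
  rw [B, bernoulliFun, Polynomial.eval_map_algebraMap]

lemma bernoulliFun_three (x : ℝ) : bernoulliFun 3 x = x ^ 3 - 3 / 2 * x ^ 2 + 1 / 2 * x := by
  simp [bernoulliFun, Polynomial.bernoulli_def, Finset.sum_range_succ,
    bernoulli_eq_bernoulli'_of_ne_one, bernoulli'_two, bernoulli'_three]
  ring

lemma bernoulliFun_four (x : ℝ) : bernoulliFun 4 x = x ^ 4 - 2 * x ^ 3 + x ^ 2 - 1 / 30 := by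
  norm_num [bernoulliFun, Polynomial.bernoulli_def, Finset.sum_range_succ, Nat.choose,
    bernoulli_eq_bernoulli'_of_ne_one, bernoulli'_two, bernoulli'_three, bernoulli'_four]
  ring

lemma exists_second_deriv_eq_zero_of_three_zeros {f f' f'' : ℝ → ℝ} (hf : ∀ x, HasDerivAt f (f' x) x)
    (hf' : ∀ x, HasDerivAt f' (f'' x) x) {a b c : ℝ} (hac : a < c) (hcb : c < b)
    (ha : f a = 0) (hc : f c = 0) (hb : f b = 0) : ∃ d ∈ Ioo a b, f'' d = 0 := by
  have hfc : Continuous f := continuous_iff_continuousAt.2 fun x => (hf x).continuousAt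
  have hf'c : Continuous f' := continuous_iff_continuousAt.2 fun x => (hf' x).continuousAt
  obtain ⟨p, hp, hp0⟩ := exists_hasDerivAt_eq_zero hac hfc.continuousOn (ha.trans hc.symm)
    fun x _ => hf x
  obtain ⟨q, hq, hq0⟩ := exists_hasDerivAt_eq_zero hcb hfc.continuousOn (hc.trans hb.symm)
    fun x _ => hf x
  obtain ⟨d, hd, hd0⟩ := exists_hasDerivAt_eq_zero (hp.2.trans hq.1) hf'c.continuousOn
    (hp0.trans hq0.symm) fun x _ => hf' x
  exact ⟨d, ⟨hp.1.trans hd.1, hd.2.trans hq.2⟩, hd0⟩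

lemma bernoulliFun_odd_ne_zero_of_lt_half (k : ℕ) {t : ℝ} (h0 : 0 < t) (h1 : t < 1 / 2) :
    bernoulliFun (2 * k + 1) t ≠ 0 := by
  induction k generalizing t with
  | zero => simpa [sub_eq_zero] using h1.ne
  | succ k ih =>
    have hder (n : ℕ) (x : ℝ) :
        HasDerivAt (bernoulliFun (n + 1)) (((n : ℝ) + 1) * bernoulliFun n x) x := by
      simpa using hasDerivAt_bernoulliFun (n + 1) x
    have hodd : Odd (2 * k + 2 + 1) := ⟨k + 1, by ring⟩
    have hzero : bernoulliFun (2 * k + 2 + 1) 0 = 0 := by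
      rw [bernoulliFun_eval_zero, bernoulli_eq_zero_of_odd hodd (by omega), Rat.cast_zero]
    have hhalf : bernoulliFun (2 * k + 2 + 1) (1 / 2) = 0 := by
      rw [one_div]; exact bernoulliFun_eval_half_eq_zero (k + 1)
    intro ht
    obtain ⟨d, hd, hd0⟩ := exists_second_deriv_eq_zero_of_three_zeros (hder (2 * k + 2))
      (fun x => (hder (2 * k + 1) x).const_mul _) h0 h1 hzero ht hhalf
    refine ih hd.1 hd.2 ?_
    have hk : (0 : ℝ) < ((2 * k + 2 : ℕ) + 1) * ((2 * k + 1 : ℕ) + 1) := by positivity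
    rw [← mul_assoc] at hd0
    exact (mul_eq_zero.1 hd0).resolve_left hk.ne'

lemma bernoulliFun_odd_ne_zero {k : ℕ} {t : ℝ} (ht : t ∈ Ioo (0 : ℝ) 1) (hhalf : t ≠ 1 / 2) :
    bernoulliFun (2 * k + 1) t ≠ 0 := by
  rcases hhalf.lt_or_gt with hlt | hgt
  · exact bernoulliFun_odd_ne_zero_of_lt_half k ht.1 hlt
  · have hsymm := bernoulliFun_eval_one_sub (k := 2 * k + 1) (x := t)
    rw [(Odd.neg_one_pow ⟨k, rfl⟩ : (-1 : ℝ) ^ (2 * k + 1) = -1), neg_one_mul] at hsymm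
    rw [← neg_ne_zero, ← hsymm]
    exact bernoulliFun_odd_ne_zero_of_lt_half k (by linarith [ht.2]) (by linarith)

noncomputable def bernoulliWronskian (k : ℕ) (t : ℝ) : ℝ :=
  (2 * k + 2) * bernoulliFun (2 * k + 1) t ^ 2
    - (2 * k + 1) * bernoulliFun (2 * k + 2) t * bernoulliFun (2 * k) t

lemma bernoulliWronskian_zero_pos (t : ℝ) : 0 < bernoulliWronskian 0 t := by
  norm_num [bernoulliWronskian]
  nlinarith [sq_nonneg (t - 1 / 2)]

lemma bernoulliWronskian_one_pos (t : ℝ) : 0 < bernoulliWronskian 1 t := by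
  norm_num [bernoulliWronskian, bernoulliFun_three, bernoulliFun_four]
  nlinarith [sq_nonneg (t - 1 / 2), sq_nonneg ((t - 1 / 2) ^ 2 - 1 / 8),
    mul_nonneg (sq_nonneg (t - 1 / 2)) (sq_nonneg ((t - 1 / 2) ^ 2 - 1 / 8))]

lemma abs_hasSum_sub_first_le {m : ℕ} (hm : 4 ≤ m) {g : ℕ → ℝ} (hg : ∀ j, |g j| ≤ 1) {L : ℝ}
    (h : HasSum (fun j : ℕ => 1 / (j : ℝ) ^ m * g j) L) : |L - g 1| ≤ 1 / 8 := by
  have hζ : HasSum (fun j : ℕ => 1 / ((j + 2 : ℕ) : ℝ) ^ 4) (π ^ 4 / 90 - 1) := by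
    simpa [Finset.sum_range_succ] using (hasSum_nat_add_iff' 2).mpr hasSum_zeta_four
  have htail : HasSum (fun j : ℕ => 1 / ((j + 2 : ℕ) : ℝ) ^ m * g (j + 2)) (L - g 1) := by
    simpa [Finset.sum_range_succ, show m ≠ 0 by omega] using (hasSum_nat_add_iff' 2).mpr h
  have hterm (j : ℕ) : ‖1 / ((j + 2 : ℕ) : ℝ) ^ m * g (j + 2)‖ ≤ 1 / ((j + 2 : ℕ) : ℝ) ^ 4 := by
    have hj : (1 : ℝ) ≤ ((j + 2 : ℕ) : ℝ) := by norm_cast; omega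
    rw [norm_mul, Real.norm_eq_abs, Real.norm_eq_abs, abs_of_pos (by positivity)]
    calc 1 / ((j + 2 : ℕ) : ℝ) ^ m * |g (j + 2)| ≤ 1 / ((j + 2 : ℕ) : ℝ) ^ m * 1 := by
          gcongr; exact hg _
      _ ≤ 1 / ((j + 2 : ℕ) : ℝ) ^ 4 := by
          rw [mul_one]; gcongr
  calc |L - g 1| ≤ π ^ 4 / 90 - 1 := htail.norm_le_of_bounded hζ hterm
    _ ≤ 1 / 8 := by
      have := pow_le_pow_left₀ pi_pos.le pi_lt_d2.le 4
      norm_num at this ⊢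
      linarith

lemma sq_add_mul_pos_of_abs_sub_le {S C C' s c : ℝ} (hS : |S - s| ≤ 1 / 8)
    (hC : |C - c| ≤ 1 / 8) (hC' : |C' - c| ≤ 1 / 8) (hsc : s ^ 2 + c ^ 2 = 1) :
    0 < S ^ 2 + C * C' := by
  have hs : |s| ≤ 1 := abs_le_one_iff_mul_self_le_one.2 (by nlinarith [sq_nonneg c])
  have hc : |c| ≤ 1 := abs_le_one_iff_mul_self_le_one.2 (by nlinarith [sq_nonneg s])
  rw [abs_le] at hS hC hC' hs hc
  nlinarith [sq_nonneg (S - s), mul_self_nonneg (C - c), mul_self_nonneg (C' - c)]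

lemma sq_add_mul_eq_mul_bernoulliWronskian (k : ℕ) {ε : ℝ} (hε : ε ^ 2 = 1) (t : ℝ) :
    (ε * (2 * π) ^ (2 * k + 1) / 2 / (2 * k + 1)! * bernoulliFun (2 * k + 1) t) ^ 2
      + (-ε * (2 * π) ^ (2 * k + 2) / 2 / (2 * k + 2)! * bernoulliFun (2 * k + 2) t)
        * (ε * (2 * π) ^ (2 * k) / 2 / (2 * k)! * bernoulliFun (2 * k) t)
      = (2 * π) ^ (4 * k + 2) / (4 * (2 * k + 2)! * (2 * k)! * (2 * k + 1))
        * bernoulliWronskian k t := by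
  have hf₁ : ((2 * k + 1)! : ℝ) = (2 * k + 1) * (2 * k)! := by
    push_cast [Nat.factorial_succ]; ring
  have hf₂ : ((2 * k + 2)! : ℝ) = (2 * k + 2) * (2 * k + 1) * (2 * k)! := by
    push_cast [Nat.factorial_succ]; ring
  calc _ = ε ^ 2 * ((2 * π) ^ (2 * k + 1) / 2 / (2 * k + 1)! * bernoulliFun (2 * k + 1) t) ^ 2
        - ε ^ 2 * ((2 * π) ^ (2 * k + 2) / 2 / (2 * k + 2)! * bernoulliFun (2 * k + 2) t)
          * ((2 * π) ^ (2 * k) / 2 / (2 * k)! * bernoulliFun (2 * k) t) := by ring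
    _ = _ := by
      rw [hε, bernoulliWronskian, hf₁, hf₂]
      field_simp
      ring

lemma bernoulliWronskian_pos_of_two_le {k : ℕ} (hk : 2 ≤ k) {t : ℝ} (ht : t ∈ Icc (0 : ℝ) 1) :
    0 < bernoulliWronskian k t := by
  have hS := hasSum_one_div_nat_pow_mul_sin (k := k) (by omega) ht
  have hC := hasSum_one_div_nat_pow_mul_cos (k := k + 1) (by omega) ht
  have hC' := hasSum_one_div_nat_pow_mul_cos (k := k) (by omega) ht
  have hS₁ := abs_hasSum_sub_first_le (by omega) (fun j => abs_sin_le_one _) hS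
  have hC₁ := abs_hasSum_sub_first_le (by omega) (fun j => abs_cos_le_one _) hC
  have hC'₁ := abs_hasSum_sub_first_le (by omega) (fun j => abs_cos_le_one _) hC'
  have hpos : 0 < ((-1) ^ (k + 1) * (2 * π) ^ (2 * k + 1) / 2 / (2 * k + 1)!
        * bernoulliFun (2 * k + 1) t) ^ 2
      + (-(-1) ^ (k + 1) * (2 * π) ^ (2 * k + 2) / 2 / (2 * k + 2)! * bernoulliFun (2 * k + 2) t)
        * ((-1) ^ (k + 1) * (2 * π) ^ (2 * k) / 2 / (2 * k)! * bernoulliFun (2 * k) t) := by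
    convert sq_add_mul_pos_of_abs_sub_le hS₁ hC₁ hC'₁ (sin_sq_add_cos_sq _) using 5
    all_goals first | rfl | ring
  have hε : ((-1 : ℝ) ^ (k + 1)) ^ 2 = 1 := by rw [← pow_mul, pow_mul']; simp
  rw [sq_add_mul_eq_mul_bernoulliWronskian k hε t] at hpos
  exact pos_of_mul_pos_right hpos (by positivity)

lemma bernoulliWronskian_pos (k : ℕ) {t : ℝ} (ht : t ∈ Icc (0 : ℝ) 1) :
    0 < bernoulliWronskian k t := by
  rcases k with _ | _ | k
  · exact bernoulliWronskian_zero_pos t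
  · exact bernoulliWronskian_one_pos t
  · exact bernoulliWronskian_pos_of_two_le (by omega) ht

lemma hasDerivAt_bernoulliFun_div (k : ℕ) {t : ℝ} (ht : bernoulliFun (2 * k + 1) t ≠ 0) :
    HasDerivAt (fun x => bernoulliFun (2 * k + 2) x / bernoulliFun (2 * k + 1) x)
      (bernoulliWronskian k t / bernoulliFun (2 * k + 1) t ^ 2) t := by
  refine ((hasDerivAt_bernoulliFun _ t).fun_div (hasDerivAt_bernoulliFun _ t) ht).congr_deriv ?_
  rw [bernoulliWronskian, show 2 * k + 2 - 1 = 2 * k + 1 by omega]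
  push_cast
  ring

lemma strictMonoOn_bernoulliFun_div {k : ℕ} {s : Set ℝ} (hs : Convex ℝ s) (hsub : s ⊆ Icc 0 1)
    (hne : ∀ t ∈ s, bernoulliFun (2 * k + 1) t ≠ 0) :
    StrictMonoOn (fun t => bernoulliFun (2 * k + 2) t / bernoulliFun (2 * k + 1) t) s := by
  refine strictMonoOn_of_deriv_pos hs ?_ fun t ht => ?_
  · exact (continuous_bernoulliFun _).continuousOn.div (continuous_bernoulliFun _).continuousOn hne
  · have ht := interior_subset ht
    rw [(hasDerivAt_bernoulliFun_div k (hne t ht)).deriv]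
    exact div_pos (bernoulliWronskian_pos k (hsub ht)) (pow_two_pos_of_ne_zero (hne t ht))

theorem stmt7 (n : ℕ) (hn : 1 ≤ n) :
    StrictMonoOn (fun t : ℝ => B (2*n) t / B (2*n-1) t) (Ioo (0:ℝ) (1/2)) ∧
    StrictMonoOn (fun t : ℝ => B (2*n) t / B (2*n-1) t) (Ioo (1/2:ℝ) 1) := by
  obtain ⟨k, rfl⟩ : ∃ k, n = k + 1 := ⟨n - 1, by omega⟩
  rw [show 2 * (k + 1) = 2 * k + 2 by ring, show 2 * k + 2 - 1 = 2 * k + 1 by omega,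
    B_eq_bernoulliFun, B_eq_bernoulliFun]
  constructor
  · refine strictMonoOn_bernoulliFun_div (convex_Ioo _ _)
      (Ioo_subset_Icc_self.trans (Icc_subset_Icc_right (by norm_num))) fun t ht => ?_
    exact bernoulliFun_odd_ne_zero ⟨ht.1, by linarith [ht.2]⟩ ht.2.ne
  · refine strictMonoOn_bernoulliFun_div (convex_Ioo _ _)
      (Ioo_subset_Icc_self.trans (Icc_subset_Icc_left (by norm_num))) fun t ht => ?_
    exact bernoulliFun_odd_ne_zero ⟨by linarith [ht.1], ht.2⟩ ht.1.ne'
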